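/- Let h_j and h_k be distinct columns of a Hajós matrix H with h_j · h_k = 0. Then h_j − h_k is rigid in Λ_H: it is simple, and its only decomposition as a sum of two nonzero orthogonal elements of Λ_H is h_j + (−h_k). -/

import Mathlib

/-!
Write `z = h_j - h_k`. If `x + y = z` then `x ⬝ᵥ y = -∑ i, x i * (x i - z i)`. The entries of `H`
are nonnegative, so `h_j ⬝ᵥ h_k = 0` means that `h_j` and `h_k` have disjoint supports: `z j = 2`,
`z k = -2` and `|z i| ≤ 1` elsewhere. Hence every term of the sum is nonnegative, except
`x j * (x j - 2) = -1` when `x j = 1` and `x k * (x k + 2) = -1` when `x k = -1`.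

Since `H` is lower triangular with `2` on the diagonal, the first nonzero entry of a nonzero lattice
vector is even. An odd entry `x j = 1` thus forces an earlier even leading entry, whose term is at
least `2` (at least `4` if it also precedes `k`) and outweighs the negative terms; when that leading
entry is `x k = -2` the same argument is applied to `x + h_k`. So the sum is nonnegative, and if it
vanishes then `x i ∈ {0, z i}` for all `i`. Subtracting the vector among `0, h_j, -h_k, z` that
agrees with `x` at `j` and `k` leaves a lattice vector with entries in `{-1, 0, 1}`, which is `0`.
-/

/-- A *Hajós matrix*: lower triangular, 2's on the diagonal, entries in `{0,1}` below. -/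
def IsHajosMatrix {n : ℕ} (H : Matrix (Fin n) (Fin n) ℤ) : Prop :=
  (∀ i, H i i = 2) ∧ (∀ i j, i < j → H i j = 0) ∧ (∀ i j, j < i → H i j = 0 ∨ H i j = 1)

/-- `Λ_H`: the sublattice of `ℤⁿ` generated by the columns of `H`. -/
def hajosLattice {n : ℕ} (H : Matrix (Fin n) (Fin n) ℤ) : AddSubgroup (Fin n → ℤ) :=
  AddSubgroup.closure (Set.range fun j => fun i => H i j)

open Matrix

lemma Int.two_le_abs_of_even {e : ℤ} (he : Even e) (h0 : e ≠ 0) : 2 ≤ |e| := by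
  obtain ⟨r, rfl⟩ := he
  rcases abs_cases (r + r) with ⟨h, _⟩ | ⟨h, _⟩ <;> omega

lemma Int.two_le_mul_sub_of_even_of_ne {e a : ℤ} (he : Even e) (h0 : e ≠ 0) (hea : e ≠ a)
    (ha : |a| ≤ 2) : 2 ≤ e * (e - a) := by
  have h2 := Int.two_le_abs_of_even he h0
  rw [abs_le] at ha
  rcases abs_cases e with ⟨h, _⟩ | ⟨h, _⟩
  · have : 1 ≤ e - a := by omega
    nlinarith
  · have : e - a ≤ -1 := by omega
    nlinarith

lemma Int.mul_sub_nonneg_of_two_mul_ne {e a : ℤ} (ha : |a| ≤ 2) (h : 2 * e ≠ a) :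
    0 ≤ e * (e - a) := by
  rw [abs_le] at ha
  rcases lt_trichotomy e 0 with he | rfl | he
  · exact mul_nonneg_of_nonpos_of_nonpos he.le (by omega)
  · simp
  · exact mul_nonneg he.le (by omega)

lemma Int.mul_sub_nonneg_of_abs_le_one {e a : ℤ} (ha : |a| ≤ 1) : 0 ≤ e * (e - a) := by
  rcases eq_or_ne (2 * e) a with h | h
  · obtain rfl : e = 0 := by rw [abs_le] at ha; omega
    simp
  · exact Int.mul_sub_nonneg_of_two_mul_ne (ha.trans one_le_two) h

lemma Int.two_le_mul_sub_of_even {e a : ℤ} (he : Even e) (h0 : e ≠ 0) (ha : |a| ≤ 1) :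
    2 ≤ e * (e - a) := by
  have hea : e ≠ a := by
    rintro rfl
    linarith [Int.two_le_abs_of_even he h0]
  exact Int.two_le_mul_sub_of_even_of_ne he h0 hea (ha.trans one_le_two)

lemma Int.four_le_mul_self_of_even {e : ℤ} (he : Even e) (h0 : e ≠ 0) : 4 ≤ e * e := by
  nlinarith [Int.two_le_abs_of_even he h0, abs_mul_abs_self e]

lemma mem_hajosLattice_iff {n : ℕ} {H : Matrix (Fin n) (Fin n) ℤ} {x : Fin n → ℤ} :
    x ∈ hajosLattice H ↔ ∃ c, H *ᵥ c = x := by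
  rw [hajosLattice, ← Submodule.span_int_eq_addSubgroupClosure]
  change x ∈ Submodule.span ℤ (Set.range H.col) ↔ _
  rw [← Matrix.range_mulVecLin]
  rfl

lemma Matrix.mulVec_apply_of_le {ι R : Type*} [Fintype ι] [LinearOrder ι]
    [NonUnitalNonAssocSemiring R] {M : Matrix ι ι R} (hlow : ∀ i t, i < t → M i t = 0)
    {c : ι → R} {m i : ι} (hc : ∀ t < m, c t = 0) (hi : i ≤ m) : (M *ᵥ c) i = M i m * c m := by
  refine Fintype.sum_eq_single m fun t htm => ?_
  rcases lt_or_gt_of_ne htm with h | h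
  · simp [hc t h]
  · simp [hlow i t (hi.trans_lt h)]

namespace IsHajosMatrix

variable {n : ℕ} {H : Matrix (Fin n) (Fin n) ℤ}

theorem exists_even_leading_entry (hH : IsHajosMatrix H) {x : Fin n → ℤ}
    (hx : x ∈ hajosLattice H) (h0 : x ≠ 0) :
    ∃ m, x m ≠ 0 ∧ Even (x m) ∧ ∀ i < m, x i = 0 := by
  obtain ⟨c, rfl⟩ := mem_hajosLattice_iff.mp hx
  have hc : ∃ t, c t ≠ 0 := by
    by_contra! hc
    exact h0 (by simp [show c = 0 from funext hc])
  obtain ⟨m, hm, hmin⟩ := wellFounded_lt.has_min {t | c t ≠ 0} hc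
  have hlead : ∀ t < m, c t = 0 := fun t ht => by_contra fun h => hmin t h ht
  have hxm : (H *ᵥ c) m = 2 * c m := by
    rw [Matrix.mulVec_apply_of_le hH.2.1 hlead le_rfl, hH.1]
  refine ⟨m, hxm ▸ mul_ne_zero two_ne_zero hm, hxm ▸ even_two_mul _, fun i hi => ?_⟩
  rw [Matrix.mulVec_apply_of_le hH.2.1 hlead hi.le, hH.2.1 i m hi, zero_mul]

theorem eq_zero_of_mem_hajosLattice_of_abs_le_one (hH : IsHajosMatrix H) {x : Fin n → ℤ}
    (hx : x ∈ hajosLattice H) (hsmall : ∀ i, |x i| ≤ 1) : x = 0 := by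
  by_contra h0
  obtain ⟨m, hm, hev, -⟩ := hH.exists_even_leading_entry hx h0
  linarith [Int.two_le_abs_of_even hev hm, hsmall m]

theorem exists_even_leading_entry_lt_of_odd (hH : IsHajosMatrix H) {x : Fin n → ℤ}
    (hx : x ∈ hajosLattice H) {p : Fin n} (hp : Odd (x p)) :
    ∃ m < p, x m ≠ 0 ∧ Even (x m) ∧ ∀ i < m, x i = 0 := by
  have hp0 : x p ≠ 0 := fun h => by simp [h] at hp
  obtain ⟨m, hm, hev, hlead⟩ := hH.exists_even_leading_entry hx fun h => hp0 (by simp [h])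
  refine ⟨m, lt_of_le_of_ne (not_lt.mp fun h => hp0 (hlead p h)) ?_, hm, hev, hlead⟩
  rintro rfl
  exact Int.not_even_iff_odd.mpr hp hev

theorem apply_nonneg (hH : IsHajosMatrix H) (i t : Fin n) : 0 ≤ H i t := by
  rcases lt_trichotomy i t with h | rfl | h
  · rw [hH.2.1 i t h]
  · rw [hH.1]; norm_num
  · rcases hH.2.2 i t h with h' | h' <;> simp [h']

theorem apply_eq_zero_or_one (hH : IsHajosMatrix H) {i t : Fin n} (h : i ≠ t) :
    H i t = 0 ∨ H i t = 1 := by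
  rcases lt_or_gt_of_ne h with h | h
  · exact Or.inl (hH.2.1 i t h)
  · exact hH.2.2 i t h

theorem mul_apply_eq_zero_of_sum_eq_zero (hH : IsHajosMatrix H) {j k : Fin n}
    (horth : ∑ i, H i j * H i k = 0) (i : Fin n) : H i j * H i k = 0 :=
  (Finset.sum_eq_zero_iff_of_nonneg fun i _ => mul_nonneg (hH.apply_nonneg i j)
    (hH.apply_nonneg i k)).mp horth i (Finset.mem_univ i)

section ColumnDifference

variable {j k : Fin n}

theorem apply_eq_zero_of_mul_eq_zero (hH : IsHajosMatrix H) (horth : ∀ i, H i j * H i k = 0) :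
    H j k = 0 := by
  simpa [hH.1] using horth j

theorem col_sub_col_apply_left (hH : IsHajosMatrix H) (horth : ∀ i, H i j * H i k = 0) :
    (H.col j - H.col k) j = 2 := by
  simp [hH.1, hH.apply_eq_zero_of_mul_eq_zero horth]

theorem col_sub_col_apply_right (hH : IsHajosMatrix H) (horth : ∀ i, H i j * H i k = 0) :
    (H.col j - H.col k) k = -2 := by
  simp [hH.1, hH.apply_eq_zero_of_mul_eq_zero (k := j) fun i => (mul_comm _ _).trans (horth i)]

theorem abs_col_sub_col_apply_le_one (hH : IsHajosMatrix H) (horth : ∀ i, H i j * H i k = 0)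
    {i : Fin n} (hij : i ≠ j) (hik : i ≠ k) : |(H.col j - H.col k) i| ≤ 1 := by
  have := horth i
  rcases hH.apply_eq_zero_or_one hij with h | h <;>
    rcases hH.apply_eq_zero_or_one hik with h' | h' <;> simp_all

theorem mul_sub_col_sub_col_nonneg (hH : IsHajosMatrix H) (horth : ∀ i, H i j * H i k = 0)
    {x : Fin n → ℤ} (hxj : x j ≠ 1) (hxk : x k ≠ -1) (i : Fin n) :
    0 ≤ x i * (x i - (H.col j - H.col k) i) := by
  rcases eq_or_ne i j with rfl | hij
  · exact Int.mul_sub_nonneg_of_two_mul_ne (by simp [hH.col_sub_col_apply_left horth])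
      (by rw [hH.col_sub_col_apply_left horth]; omega)
  rcases eq_or_ne i k with rfl | hik
  · exact Int.mul_sub_nonneg_of_two_mul_ne (by simp [hH.col_sub_col_apply_right horth])
      (by rw [hH.col_sub_col_apply_right horth]; omega)
  exact Int.mul_sub_nonneg_of_abs_le_one (hH.abs_col_sub_col_apply_le_one horth hij hik)

theorem sum_le_dotProduct_sub (hH : IsHajosMatrix H) (horth : ∀ i, H i j * H i k = 0)
    (x : Fin n → ℤ) {s : Finset (Fin n)} (hj : j ∈ s) (hk : k ∈ s) :
    ∑ i ∈ s, x i * (x i - (H.col j - H.col k) i) ≤ x ⬝ᵥ (x - (H.col j - H.col k)) :=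
  Finset.sum_le_sum_of_subset_of_nonneg (Finset.subset_univ s) fun _ _ hi =>
    Int.mul_sub_nonneg_of_abs_le_one (hH.abs_col_sub_col_apply_le_one horth
      (fun h => hi (h ▸ hj)) fun h => hi (h ▸ hk))

theorem exists_two_le_mul_sub_of_apply_eq_neg_two (hH : IsHajosMatrix H)
    (horth : ∀ i, H i j * H i k = 0) {x : Fin n → ℤ} (hx : x ∈ hajosLattice H) (hxj : x j = 1)
    (hlead : ∀ i < k, x i = 0) (hxk : x k = -2) :
    ∃ p, k < p ∧ p < j ∧ 2 ≤ x p * (x p - (H.col j - H.col k) p) := by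
  -- `x + h_k` vanishes up to `k` and is still odd at `j`, so its leading entry lies in between.
  set x' := x + H.col k
  have hx' : x' ∈ hajosLattice H := add_mem hx (AddSubgroup.subset_closure ⟨k, rfl⟩)
  obtain ⟨p, hpj, hp0, hpev, -⟩ := hH.exists_even_leading_entry_lt_of_odd hx' (p := j)
    (by simp [x', hxj, hH.apply_eq_zero_of_mul_eq_zero horth])
  have hkp : k < p := by
    by_contra! hpk
    apply hp0
    rcases hpk.lt_or_eq with h | rfl
    · simp [x', hlead p h, hH.2.1 p k h]
    · simp [x', hxk, hH.1]
  refine ⟨p, hkp, hpj, ?_⟩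
  have hgp : x p * (x p - (H.col j - H.col k) p) = x' p * (x' p - H p k) := by
    simp [x', hH.2.1 p j hpj]
    ring
  rw [hgp]
  exact Int.two_le_mul_sub_of_even hpev hp0
    (by rcases hH.apply_eq_zero_or_one hkp.ne' with h | h <;> simp [h])

theorem dotProduct_sub_pos_of_apply_eq_one (hH : IsHajosMatrix H) (hjk : j ≠ k)
    (horth : ∀ i, H i j * H i k = 0) {x : Fin n → ℤ} (hx : x ∈ hajosLattice H) (hxj : x j = 1) :
    0 < x ⬝ᵥ (x - (H.col j - H.col k)) := by
  have hpair := hH.sum_le_dotProduct_sub horth x (s := {j, k}) (by simp) (by simp)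
  rw [Finset.sum_pair hjk] at hpair
  have htriple : ∀ p, p ≠ j → p ≠ k → x j * (x j - (H.col j - H.col k) j) +
      x k * (x k - (H.col j - H.col k) k) + x p * (x p - (H.col j - H.col k) p) ≤
        x ⬝ᵥ (x - (H.col j - H.col k)) := by
    intro p hpj hpk
    have := hH.sum_le_dotProduct_sub horth x (s := {p, j, k}) (by simp) (by simp)
    rwa [Finset.sum_insert (by simp [hpj, hpk]), Finset.sum_pair hjk, add_comm] at this
  have hzk := hH.col_sub_col_apply_right horth
  have hgj : x j * (x j - (H.col j - H.col k) j) = -1 := by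
    rw [hxj, hH.col_sub_col_apply_left horth]; norm_num
  obtain ⟨m, hmj, hm0, hmev, hlead⟩ :=
    hH.exists_even_leading_entry_lt_of_odd hx (p := j) (by simp [hxj])
  have hzm : (H.col j - H.col k) m = -H m k := by simp [hH.2.1 m j hmj]
  obtain rfl | hkm := eq_or_ne k m
  · rcases eq_or_ne (x k) (-2) with hxk | hxk
    · obtain ⟨p, hkp, hpj, hgp⟩ :=
        hH.exists_two_le_mul_sub_of_apply_eq_neg_two horth hx hxj hlead hxk
      have hgk : x k * (x k - (H.col j - H.col k) k) = 0 := by rw [hxk, hzk]; norm_num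
      linarith [htriple p hpj.ne hkp.ne']
    · have := Int.two_le_mul_sub_of_even_of_ne hmev hm0 (a := (H.col j - H.col k) k)
        (by rwa [hzk]) (by rw [hzk]; norm_num)
      linarith
  rcases eq_or_ne (x k) (-1) with hxk | hxk
  · have hmk' : m < k := lt_of_le_of_ne (not_lt.mp fun h => by simp [hlead k h] at hxk) hkm.symm
    have hgm : 4 ≤ x m * (x m - (H.col j - H.col k) m) := by
      rw [hzm, hH.2.1 m k hmk', neg_zero, sub_zero]
      exact Int.four_le_mul_self_of_even hmev hm0
    have hgk : x k * (x k - (H.col j - H.col k) k) = -1 := by rw [hxk, hzk]; norm_num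
    linarith [htriple m hmj.ne hkm.symm]
  · have hgm := Int.two_le_mul_sub_of_even hmev hm0 (a := (H.col j - H.col k) m)
      (by rw [hzm]; rcases hH.apply_eq_zero_or_one hkm.symm with h | h <;> simp [h])
    have hgk := Int.mul_sub_nonneg_of_two_mul_ne (e := x k) (a := (H.col j - H.col k) k)
      (by rw [hzk]; norm_num) (by rw [hzk]; omega)
    linarith [htriple m hmj.ne hkm.symm]

theorem dotProduct_sub_pos_of_apply_eq_neg_one (hH : IsHajosMatrix H) (hjk : j ≠ k)
    (horth : ∀ i, H i j * H i k = 0) {x : Fin n → ℤ} (hx : x ∈ hajosLattice H)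
    (hxk : x k = -1) : 0 < x ⬝ᵥ (x - (H.col j - H.col k)) := by
  have := hH.dotProduct_sub_pos_of_apply_eq_one hjk.symm (fun i => (mul_comm _ _).trans (horth i))
    (neg_mem hx) (by simp [hxk])
  rwa [show -x - (H.col k - H.col j) = -(x - (H.col j - H.col k)) by abel, neg_dotProduct,
    dotProduct_neg, neg_neg] at this

theorem dotProduct_sub_nonneg (hH : IsHajosMatrix H) (hjk : j ≠ k)
    (horth : ∀ i, H i j * H i k = 0) {x : Fin n → ℤ} (hx : x ∈ hajosLattice H) :
    0 ≤ x ⬝ᵥ (x - (H.col j - H.col k)) := by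
  by_cases hxj : x j = 1
  · exact (hH.dotProduct_sub_pos_of_apply_eq_one hjk horth hx hxj).le
  by_cases hxk : x k = -1
  · exact (hH.dotProduct_sub_pos_of_apply_eq_neg_one hjk horth hx hxk).le
  exact Finset.sum_nonneg fun i _ => hH.mul_sub_col_sub_col_nonneg horth hxj hxk i

theorem eq_of_forall_apply_eq_zero_or_eq (hH : IsHajosMatrix H) (horth : ∀ i, H i j * H i k = 0)
    {x w : Fin n → ℤ} (hx : x ∈ hajosLattice H) (hw : w ∈ hajosLattice H)
    (hxz : ∀ i, x i = 0 ∨ x i = (H.col j - H.col k) i)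
    (hwz : ∀ i, w i = 0 ∨ w i = (H.col j - H.col k) i) (hj : x j = w j) (hk : x k = w k) :
    x = w := by
  refine sub_eq_zero.mp (hH.eq_zero_of_mem_hajosLattice_of_abs_le_one (sub_mem hx hw) fun i => ?_)
  rcases eq_or_ne i j with rfl | hij
  · simp [hj]
  rcases eq_or_ne i k with rfl | hik
  · simp [hk]
  have := abs_le.mp (hH.abs_col_sub_col_apply_le_one horth hij hik)
  rw [Pi.sub_apply, abs_le]
  rcases hxz i with h | h <;> rcases hwz i with h' | h' <;> omega

theorem eq_of_dotProduct_sub_eq_zero (hH : IsHajosMatrix H) (hjk : j ≠ k)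
    (horth : ∀ i, H i j * H i k = 0) {x : Fin n → ℤ} (hx : x ∈ hajosLattice H)
    (h : x ⬝ᵥ (x - (H.col j - H.col k)) = 0) :
    x = 0 ∨ x = H.col j - H.col k ∨ x = H.col j ∨ x = -H.col k := by
  have hxj : x j ≠ 1 := fun h1 => (hH.dotProduct_sub_pos_of_apply_eq_one hjk horth hx h1).ne' h
  have hxk : x k ≠ -1 := fun h1 =>
    (hH.dotProduct_sub_pos_of_apply_eq_neg_one hjk horth hx h1).ne' h
  have hxz : ∀ i, x i = 0 ∨ x i = (H.col j - H.col k) i := fun i => by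
    simpa [sub_eq_zero] using (Finset.sum_eq_zero_iff_of_nonneg fun i _ =>
      hH.mul_sub_col_sub_col_nonneg horth hxj hxk i).mp h i (Finset.mem_univ i)
  have hcol : ∀ i, H i j = 0 ∨ H i k = 0 := fun i => mul_eq_zero.mp (horth i)
  have hzj := hH.col_sub_col_apply_left horth
  have hzk := hH.col_sub_col_apply_right horth
  have hjk0 := hH.apply_eq_zero_of_mul_eq_zero horth
  have hkj0 := hH.apply_eq_zero_of_mul_eq_zero (k := j) fun i => (mul_comm _ _).trans (horth i)
  have hmem : ∀ t, H.col t ∈ hajosLattice H := fun t => AddSubgroup.subset_closure ⟨t, rfl⟩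
  rcases hxz j with hj | hj <;> rcases hxz k with hk | hk
  · refine Or.inl (hH.eq_of_forall_apply_eq_zero_or_eq horth hx (zero_mem _) hxz
      (fun _ => Or.inl rfl) (by simp [hj]) (by simp [hk]))
  · refine Or.inr (Or.inr (Or.inr (hH.eq_of_forall_apply_eq_zero_or_eq horth hx
      (neg_mem (hmem k)) hxz (fun i => ?_) (by simp [hj, hjk0]) (by simp [hk, hzk, hH.1]))))
    rcases hcol i with h | h <;> simp [h]
  · refine Or.inr (Or.inr (Or.inl (hH.eq_of_forall_apply_eq_zero_or_eq horth hx
      (hmem j) hxz (fun i => ?_) (by simp [hj, hzj, hH.1]) (by simp [hk, hkj0]))))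
    rcases hcol i with h | h <;> simp [h]
  · exact Or.inr (Or.inl (hH.eq_of_forall_apply_eq_zero_or_eq horth hx
      (sub_mem (hmem j) (hmem k)) hxz (fun _ => Or.inr rfl) hj hk))

end ColumnDifference

end IsHajosMatrix

/-- Let `h_j`, `h_k` be distinct columns of a Hajós matrix `H` with `h_j · h_k = 0`.  Then
`h_j − h_k` is rigid in `Λ_H`: it is simple (no decomposition into nonzero lattice elements
of positive pairing), and its only decomposition as a sum of two nonzero orthogonal elements
of `Λ_H` is `h_j + (−h_k)`. -/
theorem hajos_column_difference_rigid {n : ℕ} (H : Matrix (Fin n) (Fin n) ℤ)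
    (hH : IsHajosMatrix H) (j k : Fin n) (hjk : j ≠ k)
    (horth : ∑ i, H i j * H i k = 0) :
    (∀ x y : Fin n → ℤ, x ∈ hajosLattice H → y ∈ hajosLattice H → x ≠ 0 → y ≠ 0 →
        x + y = (fun i => H i j - H i k) → ∑ i, x i * y i ≤ 0) ∧
    (∀ x y : Fin n → ℤ, x ∈ hajosLattice H → y ∈ hajosLattice H → x ≠ 0 → y ≠ 0 →
        x + y = (fun i => H i j - H i k) → ∑ i, x i * y i = 0 →
        (x = (fun i => H i j) ∧ y = (fun i => -H i k)) ∨
        (x = (fun i => -H i k) ∧ y = (fun i => H i j))) := by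
  have horth' := hH.mul_apply_eq_zero_of_sum_eq_zero horth
  have hdot : ∀ x y : Fin n → ℤ, x + y = H.col j - H.col k →
      ∑ i, x i * y i = -(x ⬝ᵥ (x - (H.col j - H.col k))) := by
    intro x y hxy
    rw [← hxy, sub_add_cancel_left, dotProduct_neg, neg_neg]
    rfl
  refine ⟨fun x y hx _ _ _ hxy => ?_, fun x y hx _ hx0 hy0 hxy hxy0 => ?_⟩
  · rw [hdot x y hxy, neg_nonpos]
    exact hH.dotProduct_sub_nonneg hjk horth' hx
  · have hy : y = H.col j - H.col k - x := eq_sub_of_add_eq' hxy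
    rw [hdot x y hxy, neg_eq_zero] at hxy0
    rcases hH.eq_of_dotProduct_sub_eq_zero hjk horth' hx hxy0 with rfl | rfl | rfl | rfl
    · exact absurd rfl hx0
    · exact absurd (hy.trans (sub_self _)) hy0
    · exact Or.inl ⟨rfl, hy.trans (by ext i; simp)⟩
    · exact Or.inr ⟨rfl, hy.trans (by ext i; simp)⟩
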